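/- Let w be a linearly ordered set and p : [w]² → {≥, ⊥, u} a valuation function. Let A(p) = Fr(w)/N(p) where N(p) is the ideal generated by all u_j · u_i with p(i,j) = ⊥ and all u_j · ¬u_i with p(i,j) = ≥, and let x_i be the image of u_i. Then for every i ∈ w, x_i is not in the ideal of A(p) generated by {x_j : j > i}. In particular each x_i is nonzero, the x_i are pairwise distinct, and i < j implies x_i ≰ x_j. -/

import Mathlib

/-- The three values `≥`, `⊥`, "undefined" of a valuation function. -/
inductive VVal : Type
  | ge : VVal
  | perp : VVal
  | und : VVal
deriving DecidableEq

/-- `p` is a valuation function on the linearly ordered set `W` (only the values on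
pairs `i < j` are relevant). -/
structure IsValuation {W : Type u} [LinearOrder W] (p : W → W → VVal) : Prop where
  trans_ge : ∀ i j k : W, i < j → j < k →
    p i j = VVal.ge → p j k = VVal.ge → p i k = VVal.ge
  mix1 : ∀ i j k : W, i < j → j < k →
    p i j = VVal.perp → p i k = VVal.ge → p j k = VVal.perp
  mix2 : ∀ i j k : W, i < j → j < k →
    p i j = VVal.ge → p i k = VVal.perp → p j k = VVal.perp
  mix3 : ∀ i j k : W, i < j → j < k →
    p i j = VVal.perp → p j k = VVal.ge → p i k = VVal.perp

/-- The elements of the Boolean subalgebra generated by a set `S`. -/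
inductive BAGen {α : Type v} [BooleanAlgebra α] (S : Set α) : α → Prop
  | base {a : α} : a ∈ S → BAGen S a
  | bot : BAGen S ⊥
  | sup {a b : α} : BAGen S a → BAGen S b → BAGen S (a ⊔ b)
  | compl {a : α} : BAGen S a → BAGen S aᶜ

/-!
Fix `i` and let `V` be the set of `k` with `k = i`, or `k < i` and `p k i = ≥`. The axioms of
a valuation make `V` compatible with every relator of `N(p)`: no `⊥`-pair lies inside `V`, and
`V` is closed downwards along `≥`-pairs. Hence the Boolean homomorphism `Fr(w) → 2` sending `u k`
to `[k ∈ V]` kills `N(p)`, sends `u i` to `1` and every `u j` with `j > i` to `0`. Since `Fr(w)`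
is only assumed free through finite independence of the generators, this homomorphism is
replaced by the nonzero cell `⋀_{k ∈ S ∩ V} u k ⊓ ⋀_{k ∈ S \ V} (u k)ᶜ` over a large enough
finite `S`.
-/

section Cells

variable {W α : Type*} [BooleanAlgebra α] (u : W → α)

def relator [LinearOrder W] (p : W → W → VVal) (q : W × W) : α :=
  if p q.1 q.2 = VVal.perp then u q.2 ⊓ u q.1 else u q.2 ⊓ (u q.1)ᶜ

def cell (S : Finset W) (V : W → Prop) [DecidablePred V] : α :=
  (S.filter V).inf u ⊓ (S.filter (¬ V ·)).inf fun k => (u k)ᶜ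

variable {u} {S : Finset W} {V : W → Prop} [DecidablePred V] {k : W}

theorem cell_le_of_mem (hk : k ∈ S) (hV : V k) : cell u S V ≤ u k :=
  inf_le_left.trans (Finset.inf_le (Finset.mem_filter.2 ⟨hk, hV⟩))

theorem cell_le_compl_of_mem (hk : k ∈ S) (hV : ¬ V k) : cell u S V ≤ (u k)ᶜ :=
  inf_le_right.trans (Finset.inf_le (Finset.mem_filter.2 ⟨hk, hV⟩))

theorem cell_ne_bot
    (hind : ∀ s t : Finset W, (∀ i ∈ s, i ∉ t) → s.inf u ⊓ t.inf (fun i => (u i)ᶜ) ≠ ⊥) :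
    cell u S V ≠ ⊥ :=
  hind _ _ fun _ hs ht => (Finset.mem_filter.1 ht).2 (Finset.mem_filter.1 hs).2

/-- The truth assignment `u k ↦ [V k]` kills the relator of each pair `i < j` on which `p` is
defined. -/
def RespectsRelators [LinearOrder W] (p : W → W → VVal) (V : W → Prop) : Prop :=
  ∀ i j, i < j → (p i j = VVal.perp → ¬ (V i ∧ V j)) ∧ (p i j = VVal.ge → V j → V i)

theorem disjoint_cell_relator [LinearOrder W] {p : W → W → VVal} (hV : RespectsRelators p V)
    {q : W × W} (h₁ : q.1 ∈ S) (h₂ : q.2 ∈ S) (hq : q.1 < q.2)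
    (hpq : p q.1 q.2 = VVal.perp ∨ p q.1 q.2 = VVal.ge) :
    Disjoint (cell u S V) (relator u p q) := by
  obtain ⟨hperp, hge⟩ := hV q.1 q.2 hq
  unfold relator
  split_ifs with hq_perp
  · by_cases hV₁ : V q.1
    · have hV₂ : ¬ V q.2 := fun hV₂ => hperp hq_perp ⟨hV₁, hV₂⟩
      exact disjoint_compl_left.mono (cell_le_compl_of_mem h₂ hV₂) inf_le_left
    · exact disjoint_compl_left.mono (cell_le_compl_of_mem h₁ hV₁) inf_le_right
  · by_cases hV₂ : V q.2
    · have hV₁ : V q.1 := hge (hpq.resolve_left hq_perp) hV₂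
      exact disjoint_compl_right.mono (cell_le_of_mem h₁ hV₁) inf_le_right
    · exact disjoint_compl_left.mono (cell_le_compl_of_mem h₂ hV₂) inf_le_left

end Cells

section Valuation

variable {W : Type*} [LinearOrder W] {p : W → W → VVal}

def geBelow (p : W → W → VVal) (i k : W) : Prop :=
  k = i ∨ (k < i ∧ p k i = VVal.ge)

theorem respectsRelators_geBelow (hp : IsValuation p) (i : W) :
    RespectsRelators p (geBelow p i) := by
  intro j k hjk
  constructor
  · rintro hperp ⟨hj | ⟨-, hj⟩, hk | ⟨hki, hk⟩⟩
    · exact hjk.ne (hj.trans hk.symm)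
    · exact (hjk.trans hki).ne hj
    · subst hk
      simp [hperp] at hj
    · simp [hp.mix3 j k i hjk hki hperp hk] at hj
  · rintro hge (rfl | ⟨hki, hk⟩)
    · exact Or.inr ⟨hjk, hge⟩
    · exact Or.inr ⟨hjk.trans hki, hp.trans_ge j k i hjk hki hge hk⟩

theorem inf_inf_compl_not_le_sup_relator {α : Type*} [BooleanAlgebra α] {u : W → α}
    (hind : ∀ s t : Finset W, (∀ i ∈ s, i ∉ t) → s.inf u ⊓ t.inf (fun i => (u i)ᶜ) ≠ ⊥)
    (hp : IsValuation p) {i : W} {F : Finset W} (hF : ∀ j ∈ F, i < j) {G : Finset (W × W)}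
    (hG : ∀ q ∈ G, q.1 < q.2 ∧ (p q.1 q.2 = VVal.perp ∨ p q.1 q.2 = VVal.ge)) :
    ¬ u i ⊓ F.inf (fun j => (u j)ᶜ) ≤ G.sup (relator u p) := by
  classical
  intro hle
  set S := insert i (F ∪ G.image Prod.fst ∪ G.image Prod.snd)
  have hcell_le : cell u S (geBelow p i) ≤ u i ⊓ F.inf fun j => (u j)ᶜ := by
    refine le_inf (cell_le_of_mem (by simp [S]) (Or.inl rfl)) (Finset.le_inf fun j hj => ?_)
    refine cell_le_compl_of_mem (by simp [S, hj]) ?_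
    rintro (rfl | ⟨hji, -⟩)
    · exact (hF _ hj).false
    · exact (hF j hj).not_gt hji
  have hdisj : Disjoint (cell u S (geBelow p i)) (G.sup (relator u p)) := by
    refine Finset.disjoint_sup_right.2 fun q hq =>
      disjoint_cell_relator (respectsRelators_geBelow hp i) ?_ ?_ (hG q hq).1 (hG q hq).2
    · exact Finset.mem_insert_of_mem <| Finset.mem_union_left _ <|
        Finset.mem_union_right _ <| Finset.mem_image_of_mem _ hq
    · exact Finset.mem_insert_of_mem <| Finset.mem_union_right _ <| Finset.mem_image_of_mem _ hq
  exact cell_ne_bot hind (hdisj.eq_bot_of_le (hcell_le.trans hle))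

end Valuation

theorem BoundedLatticeHom.map_inf_inf_compl_eq_bot_of_le {ι α β : Type*} [BooleanAlgebra α]
    [BooleanAlgebra β] (c : BoundedLatticeHom α β) {a : α} {b : ι → α} {F : Finset ι}
    (h : c a ≤ F.sup (fun j => c (b j))) :
    c (a ⊓ F.inf fun j => (b j)ᶜ) = ⊥ := by
  rw [← Finset.compl_sup, map_inf, map_compl', map_finset_sup]
  exact disjoint_compl_right_iff.2 h |>.eq_bot

theorem generator_not_in_upper_ideal_general {W Fr Q : Type u} [LinearOrder W]
    [BooleanAlgebra Fr] [BooleanAlgebra Q]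
    (u : W → Fr)
    (hind : ∀ s t : Finset W, (∀ i ∈ s, i ∉ t) →
      s.inf u ⊓ t.inf (fun i => (u i)ᶜ) ≠ ⊥)
    (p : W → W → VVal) (hp : IsValuation p)
    (c : BoundedLatticeHom Fr Q)
    (hker : ∀ a : Fr, c a = ⊥ ↔ ∃ F : Finset (W × W),
      (∀ q ∈ F, q.1 < q.2 ∧ (p q.1 q.2 = VVal.perp ∨ p q.1 q.2 = VVal.ge)) ∧
      a ≤ F.sup (fun q => if p q.1 q.2 = VVal.perp then u q.2 ⊓ u q.1
        else u q.2 ⊓ (u q.1)ᶜ)) :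
    (∀ i : W, ¬ ∃ F : Finset W, (∀ j ∈ F, i < j) ∧ c (u i) ≤ F.sup (fun j => c (u j))) ∧
      (∀ i : W, c (u i) ≠ ⊥) ∧ Function.Injective (fun i : W => c (u i)) ∧
      (∀ i j : W, i < j → ¬ c (u i) ≤ c (u j)) := by
  have hupper : ∀ i : W, ¬ ∃ F : Finset W, (∀ j ∈ F, i < j) ∧
      c (u i) ≤ F.sup (fun j => c (u j)) := by
    rintro i ⟨F, hF, hle⟩
    obtain ⟨G, hG, hG_le⟩ := (hker _).1 (c.map_inf_inf_compl_eq_bot_of_le hle)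
    exact inf_inf_compl_not_le_sup_relator hind hp hF hG hG_le
  have hnot_le : ∀ i j : W, i < j → ¬ c (u i) ≤ c (u j) := fun i j hij hle =>
    hupper i ⟨{j}, by simpa using hij, by simpa using hle⟩
  refine ⟨hupper, fun i h => hupper i ⟨∅, by simp, by simp [h]⟩, fun i j h => ?_, hnot_le⟩
  rcases lt_trichotomy i j with hij | rfl | hji
  · exact (hnot_le i j hij h.le).elim
  · rfl
  · exact (hnot_le j i hji h.ge).elim

/-- Remark 3.2 for `A(p) = Fr(w)/N(p)`: each canonical generator `x i = c (u i)` is not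
in the ideal generated by `{x j : j > i}`; in particular the `x i` are nonzero, pairwise
distinct, and `i < j` implies `x i ≰ x j`. -/
theorem generator_not_in_upper_ideal {W Fr Q : Type u} [LinearOrder W]
    [BooleanAlgebra Fr] [BooleanAlgebra Q]
    (u : W → Fr)
    (hind : ∀ s t : Finset W, (∀ i ∈ s, i ∉ t) →
      s.inf u ⊓ t.inf (fun i => (u i)ᶜ) ≠ ⊥)
    (hgen : ∀ a : Fr, BAGen (Set.range u) a)
    (p : W → W → VVal) (hp : IsValuation p)
    (c : BoundedLatticeHom Fr Q) (hsurj : Function.Surjective c)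
    (hker : ∀ a : Fr, c a = ⊥ ↔ ∃ F : Finset (W × W),
      (∀ q ∈ F, q.1 < q.2 ∧ (p q.1 q.2 = VVal.perp ∨ p q.1 q.2 = VVal.ge)) ∧
      a ≤ F.sup (fun q => if p q.1 q.2 = VVal.perp then u q.2 ⊓ u q.1
        else u q.2 ⊓ (u q.1)ᶜ)) :
    (∀ i : W, ¬ ∃ F : Finset W, (∀ j ∈ F, i < j) ∧ c (u i) ≤ F.sup (fun j => c (u j))) ∧
      (∀ i : W, c (u i) ≠ ⊥) ∧ Function.Injective (fun i : W => c (u i)) ∧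
      (∀ i j : W, i < j → ¬ c (u i) ≤ c (u j)) :=
  generator_not_in_upper_ideal_general u hind p hp c hker
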